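/- Let p be a binary word of length l whose maximum run size is i. Then p does not have an internal zero at n = l + 1 if and only if p has a run of size j for every j ∈ {1, 2, …, i}. -/

import Mathlib

/-!
For `w` one letter longer than `p`, an occurrence of `p` in `w` omits exactly one position, so
`occ p w` counts the positions whose deletion from `w` yields `p`. If `p` arises from `w` by
deleting a letter `c` from a maximal block of `s + 1` letters `c`, then every deletion inside
that block gives `p` and no deletion outside it does, so `occ p w = s + 1`; when `s ≠ 0` the
shortened block is a run of `p`. Hence the values of `occ p` on words of length `l + 1` are
exactly `0`, `1` and `s + 1` for the run sizes `s` of `p`, and they form an interval precisely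
when every size `1, …, i` occurs.
-/

/-- `occ p w` is the number of occurrences of `p` as a subsequence of `w`,
i.e. the number of choices of indices `i₁ < ⋯ < i_l` in `w` matching `p`. -/
def occ (p w : List Bool) : ℕ := w.sublists.count p

/-- `B n p k` is the number of binary words of length `n` with exactly `k` occurrences of `p`. -/
noncomputable def B (n : ℕ) (p : List Bool) (k : ℕ) : ℕ :=
  Nat.card {w : List Bool // w.length = n ∧ occ p w = k}

/-- The list of runs (maximal blocks of consecutive equal letters) of a binary word. -/
def runs (p : List Bool) : List (List Bool) := p.splitBy (· == ·)

/-- The number of runs of a binary word. -/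
def numRuns (p : List Bool) : ℕ := (runs p).length

/-- The number of runs of size `i` of a binary word. -/
def numRunsOfSize (p : List Bool) (i : ℕ) : ℕ := ((runs p).map List.length).count i

/-- `maxOcc n p` is the maximum number of occurrences of `p` among binary words of length `n`. -/
noncomputable def maxOcc (n : ℕ) (p : List Bool) : ℕ :=
  sSup {k | ∃ w : List Bool, w.length = n ∧ occ p w = k}

/-- `p` has an internal zero at `n` if the sequence `(B n p k)_{k ≥ 0}` has an internal zero. -/
def HasInternalZeroAt (p : List Bool) (n : ℕ) : Prop :=
  ∃ k₁ k₂ k₃ : ℕ, k₁ < k₂ ∧ k₂ < k₃ ∧ B n p k₁ ≠ 0 ∧ B n p k₂ = 0 ∧ B n p k₃ ≠ 0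

open List
open scoped Finset

namespace List

variable {α : Type*}

theorem exists_eq_append_append_of_mem_splitBy {r : α → α → Bool} {l m : List α}
    (h : m ∈ l.splitBy r) :
    ∃ u v, l = u ++ m ++ v ∧ (∀ a ∈ u.getLast?, ∀ b ∈ m.head?, r a b = false) ∧
      ∀ a ∈ m.getLast?, ∀ b ∈ v.head?, r a b = false := by
  obtain ⟨L₁, L₂, hL⟩ := append_of_mem h
  have hnil : [] ∉ l.splitBy r := nil_notMem_splitBy r l
  have hc := isChain_getLast_head_splitBy r l
  rw [hL, isChain_append, isChain_cons] at hc
  refine ⟨L₁.flatten, L₂.flatten, ?_, ?_, ?_⟩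
  · rw [← flatten_splitBy r l, hL]; simp
  · intro a ha b hb
    have hL₁ : L₁ ≠ [] := by rintro rfl; simp at ha
    have hlast : L₁.getLast hL₁ ≠ [] := fun h0 => hnil (hL ▸ by simp [← h0, getLast_mem])
    obtain ⟨_, _, hr⟩ := hc.2.2 _ (getLast_mem_getLast? hL₁) m rfl
    rw [getLast_getLast_eq_getLast_flatten hL₁ hlast, getLast_of_mem_getLast? ha,
      head_of_mem_head? hb] at hr
    exact hr
  · intro a ha b hb
    have hL₂ : L₂ ≠ [] := by rintro rfl; simp at hb
    have hhead : L₂.head hL₂ ≠ [] := fun h0 => hnil (hL ▸ by simp [← h0, head_mem])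
    obtain ⟨_, _, hr⟩ := hc.2.1.1 _ (head_mem_head? hL₂)
    rw [head_head_eq_head_flatten hL₂ hhead, head_of_mem_head? hb,
      getLast_of_mem_getLast? ha] at hr
    exact hr

theorem exists_eq_replicate_append (l : List α) (c : α) :
    ∃ n t, l = replicate n c ++ t ∧ t.head? ≠ some c := by
  induction l with
  | nil => exact ⟨0, [], rfl, by simp⟩
  | cons d l ih =>
    by_cases hd : d = c
    · obtain ⟨n, t, rfl, ht⟩ := ih
      exact ⟨n + 1, t, by simp [hd, replicate_succ], ht⟩
    · exact ⟨0, d :: l, rfl, by simpa using hd⟩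

theorem exists_eq_append_replicate (l : List α) (c : α) :
    ∃ t n, l = t ++ replicate n c ∧ t.getLast? ≠ some c := by
  obtain ⟨n, t, h, ht⟩ := exists_eq_replicate_append l.reverse c
  refine ⟨t.reverse, n, ?_, by simpa using ht⟩
  rw [← reverse_reverse l, h, reverse_append, reverse_replicate]

theorem exists_maximal_block_of_lt_length {w : List α} {i : ℕ} (hi : i < w.length) :
    ∃ x y c s, w = x ++ replicate (s + 1) c ++ y ∧ x.getLast? ≠ some c ∧
      y.head? ≠ some c ∧ w.eraseIdx i = x ++ replicate s c ++ y := by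
  obtain ⟨x, a, hu, hx⟩ := exists_eq_append_replicate (w.take i) w[i]
  obtain ⟨b, y, hv, hy⟩ := exists_eq_replicate_append (w.drop (i + 1)) w[i]
  refine ⟨x, y, w[i], a + b, ?_, hx, hy, ?_⟩
  · have hw : w = take i w ++ w[i] :: drop (i + 1) w := by
      rw [getElem_cons_drop, take_append_drop]
    nth_rewrite 1 [hw]
    rw [hu, hv, show a + b + 1 = a + 1 + b by omega]
    simp [← replicate_append_replicate, replicate_succ']
  · rw [eraseIdx_eq_take_drop_succ, hu, hv]
    simp [← replicate_append_replicate]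

theorem eraseIdx_append_replicate_append {x y : List α} {c : α} {s j : ℕ} (hj : j ≤ s) :
    (x ++ replicate (s + 1) c ++ y).eraseIdx (x.length + j) = x ++ replicate s c ++ y := by
  rw [append_assoc, eraseIdx_append_of_length_le (by omega), Nat.add_sub_cancel_left,
    eraseIdx_append_of_lt_length (by simp; omega), eraseIdx_replicate, if_pos (by omega)]
  simp

theorem eraseIdx_append_replicate_append_ne {x y : List α} {c : α} {s i : ℕ}
    (hx : x.getLast? ≠ some c) (hy : y.head? ≠ some c)
    (hi : i < x.length ∨ x.length + s < i) :
    (x ++ replicate (s + 1) c ++ y).eraseIdx i ≠ x ++ replicate s c ++ y := by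
  intro h
  rcases hi with hi | hi
  · have h' : (x.eraseIdx i ++ [c]) ++ (replicate s c ++ y) = x ++ (replicate s c ++ y) := by
      simpa [eraseIdx_append_of_lt_length hi, replicate_succ] using h
    exact hx (by rw [← append_cancel_right h', getLast?_concat])
  · obtain ⟨k, rfl⟩ : ∃ k, i = x.length + s + 1 + k := ⟨i - (x.length + s + 1), by omega⟩
    rw [show x ++ replicate (s + 1) c ++ y = (x ++ replicate s c) ++ c :: y by
        simp [replicate_succ'],
      show x.length + s + 1 + k = (x ++ replicate s c).length + (k + 1) by simp; omega,
      eraseIdx_append_of_length_le (by omega), Nat.add_sub_cancel_left, eraseIdx_cons_succ] at h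
    exact hy (by rw [← append_cancel_left h, head?_cons])

theorem foldr_max_mem [LinearOrder α] [OrderBot α] {l : List α}
    (h : l.foldr max ⊥ ≠ ⊥) : l.foldr max ⊥ ∈ l := by
  have hl : l ≠ [] := by rintro rfl; exact h rfl
  exact maximum_mem (foldr_max_of_ne_nil hl).symm

end List


theorem occ_eq_count_sublists' (p w : List Bool) : occ p w = w.sublists'.count p :=
  (sublists_perm_sublists' w).count_eq p

theorem occ_nil_left (w : List Bool) : occ [] w = 1 := by
  induction w with
  | nil => rfl
  | cons b w ih =>
    rw [occ_eq_count_sublists'] at *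
    rw [sublists'_cons, count_append, ih, count_eq_zero.2 (by simp)]

theorem occ_cons_cons (a b : Bool) (p w : List Bool) :
    occ (a :: p) (b :: w) = occ (a :: p) w + if a = b then occ p w else 0 := by
  simp only [occ_eq_count_sublists', sublists'_cons, count_append]
  split_ifs with hab
  · rw [hab, count_map_of_injective _ _ (cons_injective)]
  · rw [count_eq_zero.2 (show a :: p ∉ map (cons b) w.sublists' by simp [Ne.symm hab])]

theorem occ_eq_zero_of_length_lt {p w : List Bool} (h : w.length < p.length) : occ p w = 0 :=
  count_eq_zero.2 fun hm => (mem_sublists.1 hm).length_le.not_gt h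

theorem occ_self (w : List Bool) : occ w w = 1 := by
  induction w with
  | nil => exact occ_nil_left []
  | cons b w ih => rw [occ_cons_cons, if_pos rfl, ih, occ_eq_zero_of_length_lt (by simp)]

theorem occ_of_length_eq {p w : List Bool} (h : w.length = p.length) :
    occ p w = if w = p then 1 else 0 := by
  split_ifs with hwp
  · rw [hwp, occ_self]
  · exact count_eq_zero.2 fun hm => hwp ((mem_sublists.1 hm).eq_of_length h.symm).symm

theorem occ_eq_card_eraseIdx {p w : List Bool} (h : w.length = p.length + 1) :
    occ p w = #{i ∈ Finset.range w.length | w.eraseIdx i = p} := by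
  induction w generalizing p with
  | nil => simp at h
  | cons b w ih =>
    rw [Finset.card_filter, length_cons, Finset.sum_range_succ']
    cases p with
    | nil =>
      obtain rfl : w = [] := by simpa using h
      simp [occ_nil_left]
    | cons a p =>
      simp only [length_cons, Nat.add_right_cancel_iff] at h
      rw [occ_cons_cons, occ_of_length_eq (by simp [h]), ih h, Finset.card_filter, add_comm]
      by_cases hab : a = b
      · simp [hab]
      · simp [hab, Ne.symm hab]

theorem exists_eraseIdx_eq_of_occ_ne_zero {p w : List Bool} (h : w.length = p.length + 1)
    (h0 : occ p w ≠ 0) : ∃ i < w.length, w.eraseIdx i = p := by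
  rw [occ_eq_card_eraseIdx h, Finset.card_ne_zero] at h0
  obtain ⟨i, hi⟩ := h0
  exact ⟨i, by simpa using hi⟩

theorem occ_append_replicate_append {x y : List Bool} {c : Bool} (hx : x.getLast? ≠ some c)
    (hy : y.head? ≠ some c) (s : ℕ) :
    occ (x ++ replicate s c ++ y) (x ++ replicate (s + 1) c ++ y) = s + 1 := by
  have hblock : {i ∈ Finset.range (x ++ replicate (s + 1) c ++ y).length |
      (x ++ replicate (s + 1) c ++ y).eraseIdx i = x ++ replicate s c ++ y} =
      Finset.Icc x.length (x.length + s) := by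
    ext i
    simp only [Finset.mem_filter, Finset.mem_range, Finset.mem_Icc]
    constructor
    · rintro ⟨-, h⟩
      by_contra hi
      exact eraseIdx_append_replicate_append_ne hx hy (by omega) h
    · rintro ⟨h₁, h₂⟩
      obtain ⟨j, rfl⟩ := Nat.exists_eq_add_of_le h₁
      exact ⟨by simp; omega, eraseIdx_append_replicate_append (by omega)⟩
  rw [occ_eq_card_eraseIdx (by simp; omega), hblock, Nat.card_Icc]
  omega

theorem runs_append_replicate_append {x y : List Bool} {c : Bool} {s : ℕ} (hs : s ≠ 0)
    (hx : x.getLast? ≠ some c) (hy : y.head? ≠ some c) :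
    runs (x ++ replicate s c ++ y) = runs x ++ replicate s c :: runs y := by
  have hrep : replicate s c ≠ [] := by simpa using hs
  rw [runs, splitBy_append, splitBy_append, splitBy_of_isChain hrep]
  · simp [runs]
  · exact isChain_replicate_of_rel s (beq_self_eq_true c)
  · intro a ha b hb
    obtain rfl : c = b := by simpa [head?_replicate, hs] using hb
    simpa using fun h : a = c => hx (h ▸ ha)
  · intro a ha b hb
    obtain rfl : c = a := by simpa [getLast?_append, getLast?_replicate, hs] using ha
    simpa using fun h : c = b => hy (h ▸ hb)

theorem exists_eq_append_replicate_append_of_mem_runs {p q : List Bool} (hq : q ∈ runs p) :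
    ∃ x y c, p = x ++ replicate q.length c ++ y ∧ x.getLast? ≠ some c ∧
      y.head? ≠ some c := by
  obtain ⟨x, y, rfl, hx, hy⟩ := exists_eq_append_append_of_mem_splitBy hq
  have hq' : q ≠ [] := ne_nil_of_mem_splitBy hq
  obtain ⟨c, hhead⟩ := Option.ne_none_iff_exists'.1 (mt head?_eq_none_iff.1 hq')
  have hc : q = replicate q.length c :=
    isChain_eq_iff_eq_replicate.1 ((isChain_of_mem_splitBy hq).imp fun a b h => by simpa using h)
      c hhead
  have hlast : q.getLast? = some c := by
    rw [hc, getLast?_replicate, if_neg (by simpa using hq')]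
  refine ⟨x, y, c, by rw [← hc], fun h => ?_, fun h => ?_⟩
  · simpa using hx c h c hhead
  · simpa using hy c hlast c h

theorem exists_mem_runs_of_occ_eq {p w : List Bool} {s : ℕ} (hw : w.length = p.length + 1)
    (hocc : occ p w = s + 2) : ∃ q ∈ runs p, q.length = s + 1 := by
  obtain ⟨i, hi, rfl⟩ := exists_eraseIdx_eq_of_occ_ne_zero hw (by omega)
  obtain ⟨x, y, c, t, rfl, hx, hy, herase⟩ := exists_maximal_block_of_lt_length hi
  rw [herase, occ_append_replicate_append hx hy] at hocc
  rw [herase, runs_append_replicate_append (by omega) hx hy]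
  exact ⟨replicate t c, by simp, by simp; omega⟩

def OccAttained (n : ℕ) (p : List Bool) (k : ℕ) : Prop :=
  ∃ w : List Bool, w.length = n ∧ occ p w = k

theorem occAttained_zero {p : List Bool} (hp : p ≠ []) : OccAttained (p.length + 1) p 0 := by
  obtain ⟨a, p, rfl⟩ := exists_cons_of_ne_nil hp
  refine ⟨replicate (p.length + 2) (!a), by simp, count_eq_zero.2 fun hm => ?_⟩
  simpa using (mem_sublists.1 hm).subset mem_cons_self

theorem occAttained_one {p : List Bool} (hp : p ≠ []) : OccAttained (p.length + 1) p 1 := by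
  obtain ⟨a, p, rfl⟩ := exists_cons_of_ne_nil hp
  refine ⟨(!a) :: a :: p, rfl, ?_⟩
  simpa using occ_append_replicate_append (x := []) (y := a :: p) (c := !a) (by simp) (by simp) 0

theorem occAttained_length_succ_of_mem_runs {p q : List Bool} (hq : q ∈ runs p) :
    OccAttained (p.length + 1) p (q.length + 1) := by
  obtain ⟨x, y, c, rfl, hx, hy⟩ := exists_eq_append_replicate_append_of_mem_runs hq
  exact ⟨x ++ replicate (q.length + 1) c ++ y, by simp; omega,
    occ_append_replicate_append hx hy _⟩

theorem occAttained_length_succ_iff {p : List Bool} (hp : p ≠ []) (k : ℕ) :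
    OccAttained (p.length + 1) p k ↔ k ≤ 1 ∨ ∃ q ∈ runs p, q.length + 1 = k := by
  constructor
  · rintro ⟨w, hw, rfl⟩
    by_cases hk : occ p w ≤ 1
    · exact .inl hk
    · obtain ⟨q, hq, hlen⟩ := exists_mem_runs_of_occ_eq (s := occ p w - 2) hw (by omega)
      exact .inr ⟨q, hq, by omega⟩
  · rintro (hk | ⟨q, hq, rfl⟩)
    · interval_cases k
      exacts [occAttained_zero hp, occAttained_one hp]
    · exact occAttained_length_succ_of_mem_runs hq

theorem exists_internal_gap_iff {S : ℕ → Prop} {R : List ℕ}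
    (hS : ∀ k, S k ↔ k ≤ 1 ∨ ∃ j ∈ R, j + 1 = k) :
    (∃ k₁ k₂ k₃, k₁ < k₂ ∧ k₂ < k₃ ∧ S k₁ ∧ ¬S k₂ ∧ S k₃) ↔
      ∃ j, 1 ≤ j ∧ j ≤ R.foldr max 0 ∧ j ∉ R := by
  constructor
  · rintro ⟨k₁, k₂, k₃, h₁₂, h₂₃, -, h₂, h₃⟩
    rw [hS] at h₂ h₃
    obtain ⟨hk₂, hgap⟩ := not_or.1 h₂
    obtain ⟨j₃, hj₃, rfl⟩ := h₃.resolve_left (by omega)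
    exact ⟨k₂ - 1, by omega, le_max_of_le (a := k₂ - 1) hj₃ (by omega),
      fun h => hgap ⟨_, h, by omega⟩⟩
  · rintro ⟨j, hj₁, hjR, hj⟩
    have hmax : R.foldr max 0 ∈ R :=
      foldr_max_mem (Nat.pos_iff_ne_zero.1 (by omega : 0 < R.foldr max 0))
    have hjlt : j < R.foldr max 0 := lt_of_le_of_ne hjR fun h => hj (h ▸ hmax)
    refine ⟨0, j + 1, R.foldr max 0 + 1, by omega, by omega, (hS 0).2 (.inl zero_le_one), ?_,
      (hS _).2 (.inr ⟨_, hmax, rfl⟩)⟩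
    rw [hS]
    rintro (h | ⟨i, hi, h⟩)
    · omega
    · exact hj (by rwa [← Nat.succ_injective h])

theorem B_ne_zero_iff_occAttained {n : ℕ} {p : List Bool} {k : ℕ} :
    B n p k ≠ 0 ↔ OccAttained n p k := by
  have : Finite {w : List Bool // w.length = n ∧ occ p w = k} :=
    ((List.finite_length_eq Bool n).subset fun _ hw => hw.1).to_subtype
  rw [B, Nat.card_ne_zero]
  simp [OccAttained, nonempty_subtype, this]

theorem hasInternalZeroAt_iff {p : List Bool} {n : ℕ} :
    HasInternalZeroAt p n ↔ ∃ k₁ k₂ k₃, k₁ < k₂ ∧ k₂ < k₃ ∧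
      OccAttained n p k₁ ∧ ¬OccAttained n p k₂ ∧ OccAttained n p k₃ := by
  simp only [HasInternalZeroAt, ← B_ne_zero_iff_occAttained, Ne, not_not]

theorem no_internalZero_at_length_succ_iff (p : List Bool) (l i : ℕ) (hl : p.length = l)
    (hi : ((runs p).map List.length).foldr max 0 = i) :
    ¬ HasInternalZeroAt p (l + 1) ↔
      ∀ j, 1 ≤ j → j ≤ i → ∃ q ∈ runs p, q.length = j := by
  subst hl hi
  rw [hasInternalZeroAt_iff]
  rcases eq_or_ne p [] with rfl | hp
  · refine ⟨fun _ j h₁ h₂ => absurd h₂ (by simp [runs]; omega), ?_⟩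
    rintro - ⟨k₁, k₂, k₃, h₁₂, h₂₃, ⟨w₁, -, hw₁⟩, -, ⟨w₃, -, hw₃⟩⟩
    rw [occ_nil_left] at hw₁ hw₃
    omega
  · rw [exists_internal_gap_iff (R := (runs p).map length)
      fun k => by rw [occAttained_length_succ_iff hp]; simp]
    simp
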